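/- arXiv:1901.10363 — 2 statements merged into one kernel-verified Lean document; each statement's English description precedes it below -/
import Mathlib

section
/- If f : [a,b] → ℝ is monotone increasing (with a ≤ b) and measurable, then f(b) − f(a) ≥ ∫_a^b D⁺f(x) dx, where D⁺f(x) = liminf_{ε↓0} (f(x+ε) − f(x))/ε is the lower-right Dini derivative of f. -/
open MeasureTheory Filter Set

/-- The lower-right Dini derivative of `f` at `x`. -/
noncomputable def lowerRightDini (f : ℝ → ℝ) (x : ℝ) : ℝ :=
  liminf (fun ε : ℝ => (f (x + ε) - f x) / ε) (nhdsWithin 0 (Set.Ioi 0))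

theorem stmt_0 (f : ℝ → ℝ) (a b : ℝ) (hab : a ≤ b)
    (hmono : MonotoneOn f (Set.Icc a b)) (hmeas : Measurable f) :
    f b - f a ≥ ∫ x in a..b, lowerRightDini f x := by
  -- extend `f` to a monotone function `g` on all of `ℝ` by clamping
  set g : ℝ → ℝ := fun x => f (max a (min x b)) with hg_def
  have hclamp : ∀ x, max a (min x b) ∈ Set.Icc a b := fun x =>
    ⟨le_max_left _ _, max_le (by linarith [min_le_right x b]) (min_le_right x b)⟩
  have hg : Monotone g := fun x y hxy =>
    hmono (hclamp x) (hclamp y) (max_le_max le_rfl (min_le_min hxy le_rfl))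
  have hg_eq : ∀ x ∈ Set.Icc a b, g x = f x := by
    intro x hx
    simp only [hg_def]
    rw [min_eq_left hx.2, max_eq_right hx.1]
  set μ := hg.stieltjesFunction.measure with hμ
  set g' : ℝ → ℝ := fun x => (μ.rnDeriv volume x).toReal with hg'
  -- a.e. on `Ioc a b`, the Dini derivative of `f` equals `g'`
  have hb_ne : ∀ᵐ x : ℝ, x ≠ b := by
    rw [ae_iff]
    have : {x : ℝ | ¬ x ≠ b} = {b} := by ext x; simp
    rw [this]; exact Real.volume_singleton
  have hae : ∀ᵐ x ∂(volume.restrict (Set.Ioc a b)), lowerRightDini f x = g' x := by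
    filter_upwards [ae_restrict_mem measurableSet_Ioc, ae_restrict_of_ae hg.ae_hasDerivAt,
      ae_restrict_of_ae hb_ne] with x hx hderiv hxb
    have hxb' : x < b := lt_of_le_of_ne hx.2 hxb
    -- slope of `g` tends to `g' x` from the right
    have h1 : Tendsto (fun y => (g y - g x) / (y - x)) (nhdsWithin x (Set.Ioi x))
        (nhds (g' x)) := by
      have := (hasDerivAt_iff_tendsto_slope.1 hderiv).mono_left
        (nhdsWithin_mono x (fun y hy => ne_of_gt hy : Set.Ioi x ⊆ {x}ᶜ))
      simpa [slope_fun_def_field] using this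
    have hmap : Tendsto (fun ε : ℝ => x + ε) (nhdsWithin 0 (Set.Ioi 0))
        (nhdsWithin x (Set.Ioi x)) := by
      apply tendsto_nhdsWithin_of_tendsto_nhds_of_eventually_within
      · have : Tendsto (fun ε : ℝ => x + ε) (nhds 0) (nhds (x + 0)) :=
          tendsto_const_nhds.add tendsto_id
        simpa using this.mono_left nhdsWithin_le_nhds
      · filter_upwards [self_mem_nhdsWithin] with ε (hε : 0 < ε)
        simpa using hε
    have h2 : Tendsto (fun ε : ℝ => (g (x + ε) - g x) / ε) (nhdsWithin 0 (Set.Ioi 0))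
        (nhds (g' x)) := by
      have := h1.comp hmap
      simpa [Function.comp_def, add_sub_cancel_left] using this
    -- eventually the slopes of `f` and `g` agree
    have hev : (fun ε : ℝ => (f (x + ε) - f x) / ε) =ᶠ[nhdsWithin 0 (Set.Ioi 0)]
        (fun ε : ℝ => (g (x + ε) - g x) / ε) := by
      have hmem : Set.Ioo (0 : ℝ) (b - x) ∈ nhdsWithin 0 (Set.Ioi 0) :=
        Ioo_mem_nhdsGT_of_mem ⟨le_rfl, by linarith⟩
      filter_upwards [hmem] with ε hε
      have hxε : x + ε ∈ Set.Icc a b := ⟨by linarith [hx.1.le, hε.1.le], by linarith [hε.2]⟩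
      rw [hg_eq _ hxε, hg_eq _ ⟨hx.1.le, hx.2⟩]
    rw [lowerRightDini, liminf_congr hev]
    exact h2.liminf_eq
  -- rewrite the integral
  rw [intervalIntegral.integral_of_le hab, integral_congr_ae hae]
  -- bound the integral of `g'`
  have hfin : μ (Set.Ioc a b) < ⊤ := by
    rw [hμ, StieltjesFunction.measure_Ioc]
    exact ENNReal.ofReal_lt_top
  have h3 : ∫ x in Set.Ioc a b, g' x = (∫⁻ x in Set.Ioc a b, μ.rnDeriv volume x).toReal := by
    apply integral_toReal (μ.measurable_rnDeriv volume).aemeasurable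
    exact ae_restrict_of_ae (Measure.rnDeriv_lt_top μ volume)
  have h4 : (∫⁻ x in Set.Ioc a b, μ.rnDeriv volume x) ≤ μ (Set.Ioc a b) :=
    Measure.setLIntegral_rnDeriv_le _
  have h5 : (μ (Set.Ioc a b)).toReal ≤ f b - f a := by
    rw [hμ, StieltjesFunction.measure_Ioc]
    rw [ENNReal.toReal_ofReal_eq_iff.2]
    · -- `G b - G a ≤ f b - f a`
      have hGb : hg.stieltjesFunction b = f b := by
        rw [hg.stieltjesFunction_eq]
        apply le_antisymm
        · have := hg.rightLim_le (show b < b + 1 by linarith)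
          have hgb1 : g (b + 1) = f b := by
            simp only [hg_def]
            rw [min_eq_right (by linarith : b ≤ b + 1), max_eq_right hab]
          rwa [hgb1] at this
        · have := hg.le_rightLim (le_refl b)
          have hgb : g b = f b := hg_eq b ⟨hab, le_rfl⟩
          rwa [hgb] at this
      have hGa : f a ≤ hg.stieltjesFunction a := by
        rw [hg.stieltjesFunction_eq]
        have := hg.le_rightLim (le_refl a)
        have hga : g a = f a := hg_eq a ⟨le_rfl, hab⟩
        rwa [hga] at this
      rw [hGb]
      linarith
    · exact sub_nonneg.2 (hg.stieltjesFunction.mono hab)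
  calc ∫ x in Set.Ioc a b, g' x
      = (∫⁻ x in Set.Ioc a b, μ.rnDeriv volume x).toReal := h3
    _ ≤ (μ (Set.Ioc a b)).toReal := ENNReal.toReal_mono hfin.ne h4
    _ ≤ f b - f a := h5
end

section
/- Let S be a finite type and μ a fully supported probability measure on {0,1}^S satisfying the FKG lattice condition: μ(ω₁ ∨ ω₂)·μ(ω₁ ∧ ω₂) ≥ μ(ω₁)·μ(ω₂) for all ω₁, ω₂. Then for any e ∈ S and any two configurations ξ ≥ ζ on a subset F ⊆ S with e ∉ F, μ(ω(e)=1 | ω agrees with ξ on F) ≥ μ(ω(e)=1 | ω agrees with ζ on F). -/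
/-!
By the four functions theorem, the FKG lattice condition on point masses upgrades to
`μ A * μ B ≤ μ (A ⊻ B) * μ (A ⊼ B)` for all events `A`, `B`. Take `A = {ω e = true, ω = ζ on F}`
and `B = {ω = ξ on F}`: as `ζ ≤ ξ` on `F`, joins of their elements lie in `{ω e = true, ω = ξ on F}`
and meets in `{ω = ζ on F}`, and cross-multiplying gives the inequality of conditional
probabilities, whose denominators are positive by full support.
-/

open MeasureTheory

open scoped SetFamily

theorem ENNReal.div_le_div_of_mul_le_mul {a b c d : ENNReal} (hb₀ : b ≠ 0) (hb : b ≠ ⊤)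
    (hd₀ : d ≠ 0) (hd : d ≠ ⊤) (h : a * d ≤ c * b) : a / b ≤ c / d := by
  rw [ENNReal.div_le_iff hb₀ hb, ← ENNReal.mul_div_right_comm,
    ENNReal.le_div_iff_mul_le (.inl hd₀) (.inl hd)]
  exact h

section FourFunctions

variable {α : Type*} [DistribLattice α] [Finite α] [MeasurableSpace α]
  [MeasurableSingletonClass α] (μ : Measure α) [IsFiniteMeasure μ]

theorem measure_mul_le_measure_sups_mul_measure_infs
    (h : ∀ a b, μ {a} * μ {b} ≤ μ {a ⊔ b} * μ {a ⊓ b}) (s t : Set α) :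
    μ s * μ t ≤ μ (s ⊻ t) * μ (s ⊼ t) := by
  classical
  have := Fintype.ofFinite α
  have hreal (a b : α) : μ.real {a} * μ.real {b} ≤ μ.real {a ⊓ b} * μ.real {a ⊔ b} := by
    simp only [measureReal_def, ← ENNReal.toReal_mul]
    rw [mul_comm (μ {a ⊓ b})]
    exact ENNReal.toReal_mono (by finiteness) (h a b)
  have key := four_functions_theorem (fun a ↦ μ.real {a}) _ _ _ (fun _ ↦ measureReal_nonneg)
    (fun _ ↦ measureReal_nonneg) (fun _ ↦ measureReal_nonneg) (fun _ ↦ measureReal_nonneg)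
    hreal s.toFinset t.toFinset
  simp only [sum_measureReal_singleton, Finset.coe_infs, Finset.coe_sups, Set.coe_toFinset] at key
  rw [← ENNReal.toReal_le_toReal (by finiteness) (by finiteness)]
  simpa only [ENNReal.toReal_mul, measureReal_def, mul_comm (μ (s ⊼ t)).toReal] using key

end FourFunctions

theorem stmt_17_general {S : Type*} [Fintype S] (μ : Measure (S → Bool)) [IsProbabilityMeasure μ]
    (hfull : ∀ ω : S → Bool, 0 < μ {ω})
    (hFKG : ∀ ω₁ ω₂ : S → Bool, μ {ω₁} * μ {ω₂} ≤ μ {ω₁ ⊔ ω₂} * μ {ω₁ ⊓ ω₂})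
    (e : S) (F : Finset S) (ξ ζ : S → Bool) (hξζ : ∀ i ∈ F, ζ i ≤ ξ i) :
    μ {ω | ω e = true ∧ ∀ i ∈ F, ω i = ζ i} / μ {ω | ∀ i ∈ F, ω i = ζ i}
      ≤ μ {ω | ω e = true ∧ ∀ i ∈ F, ω i = ξ i} / μ {ω | ∀ i ∈ F, ω i = ξ i} := by
  have hcyl (η : S → Bool) : μ {ω | ∀ i ∈ F, ω i = η i} ≠ 0 :=
    ((hfull η).trans_le (measure_mono (by simp))).ne'
  refine ENNReal.div_le_div_of_mul_le_mul (hcyl ζ) (measure_ne_top _ _) (hcyl ξ)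
    (measure_ne_top _ _) ((measure_mul_le_measure_sups_mul_measure_infs μ hFKG _ _).trans
      (mul_le_mul' (measure_mono ?_) (measure_mono ?_)))
  · rintro _ ⟨ω₁, ⟨he₁, hF₁⟩, ω₂, hF₂, rfl⟩
    exact ⟨by simp [he₁], fun i hi ↦ by simp [hF₁ i hi, hF₂ i hi, hξζ i hi]⟩
  · rintro _ ⟨ω₁, ⟨-, hF₁⟩, ω₂, hF₂, rfl⟩ i hi
    simp [hF₁ i hi, hF₂ i hi, hξζ i hi]

theorem stmt_17 {S : Type*} [Fintype S] (μ : Measure (S → Bool)) [IsProbabilityMeasure μ]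
    (hfull : ∀ ω : S → Bool, 0 < μ {ω})
    (hFKG : ∀ ω₁ ω₂ : S → Bool, μ {ω₁} * μ {ω₂} ≤ μ {ω₁ ⊔ ω₂} * μ {ω₁ ⊓ ω₂})
    (e : S) (F : Finset S) (he : e ∉ F) (ξ ζ : S → Bool) (hξζ : ∀ i ∈ F, ζ i ≤ ξ i) :
    μ {ω | ω e = true ∧ ∀ i ∈ F, ω i = ζ i} / μ {ω | ∀ i ∈ F, ω i = ζ i}
      ≤ μ {ω | ω e = true ∧ ∀ i ∈ F, ω i = ξ i} / μ {ω | ∀ i ∈ F, ω i = ξ i} :=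
  stmt_17_general μ hfull hFKG e F ξ ζ hξζ
end
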